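/- Let A₁, A₂ be unital *-algebras over ℂ and φᵢ : Aᵢ → ℂ states (positive unital linear functionals). Then φ₁ ⊗ φ₂ is a state on the tensor product *-algebra A₁ ⊗ A₂; in particular (φ₁ ⊗ φ₂)((x*)·x) ≥ 0 for all x ∈ A₁ ⊗ A₂. -/

import Mathlib

/-!
Write `x = ∑ aᵢ ⊗ bᵢ`. Then `(φ₁ ⊗ φ₂)(x* x) = ∑ᵢⱼ φ₁(aᵢ* aⱼ) φ₂(bᵢ* bⱼ)` is the sum of the
entries of the Schur (entrywise) product of the Gram matrices `(φ₁(aᵢ* aⱼ))` and `(φ₂(bᵢ* bⱼ))`.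
Positivity of `φₖ` makes each Gram matrix positive semidefinite, hence so is their Schur product
by the Schur product theorem, and the entries of a positive semidefinite matrix have nonnegative
sum (evaluate its quadratic form at the all-ones vector).
-/

open scoped ComplexOrder TensorProduct

/-- The product functional `φ₁ ⊗ φ₂` on `A₁ ⊗ A₂`. -/
noncomputable def tensorFunctional {A₁ A₂ : Type*}
    [Ring A₁] [Algebra ℂ A₁] [Ring A₂] [Algebra ℂ A₂]
    (φ₁ : A₁ →ₗ[ℂ] ℂ) (φ₂ : A₂ →ₗ[ℂ] ℂ) : A₁ ⊗[ℂ] A₂ →ₗ[ℂ] ℂ :=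
  (LinearMap.mul' ℂ ℂ).comp (TensorProduct.map φ₁ φ₂)

open Matrix

namespace Matrix

theorem PosSemidef.sum_sum_nonneg {n R : Type*} [Fintype n] [Ring R] [PartialOrder R]
    [StarRing R] {M : Matrix n n R} (hM : M.PosSemidef) : 0 ≤ ∑ i, ∑ j, M i j := by
  simpa [dotProduct, mulVec] using hM.dotProduct_mulVec_nonneg fun _ ↦ 1

/-- Over `ℂ`, by polarization, a matrix whose quadratic form is real-valued is hermitian. -/
theorem posSemidef_of_dotProduct_mulVec_nonneg {n : Type*} [Fintype n] {M : Matrix n n ℂ}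
    (hM : ∀ x, 0 ≤ star x ⬝ᵥ (M *ᵥ x)) : M.PosSemidef := by
  classical
  rw [← isPositive_toEuclideanLin_iff, LinearMap.isPositive_iff_complex]
  intro x
  have hx : 0 ≤ inner ℂ (toEuclideanLin M x) x := by
    rw [EuclideanSpace.inner_eq_star_dotProduct, toLpLin_apply, dotProduct_comm,
      ← star_nonneg_iff, ← star_dotProduct]
    exact hM x.ofLp
  exact ⟨(Complex.eq_re_of_ofReal_le hx).symm, (Complex.nonneg_iff.mp hx).1⟩

end Matrix

section PositiveFunctional

variable {A : Type*} [Ring A] [Algebra ℂ A] [StarRing A] [StarModule ℂ A]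
  {n : Type*} [Fintype n]

theorem star_dotProduct_mulVec_apply_star_mul (φ : A →ₗ[ℂ] ℂ) (a : n → A) (x : n → ℂ) :
    star x ⬝ᵥ (of (fun i j ↦ φ (star (a i) * a j)) *ᵥ x)
      = φ (star (∑ i, x i • a i) * ∑ i, x i • a i) := by
  rw [star_sum, Finset.sum_mul_sum, map_sum]
  simp only [dotProduct, mulVec, of_apply, Finset.mul_sum, map_sum, star_smul, smul_mul_smul_comm,
    map_smul, smul_eq_mul, Pi.star_apply, RCLike.star_def]
  exact Finset.sum_congr rfl fun i _ ↦ Finset.sum_congr rfl fun j _ ↦ by ring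

theorem posSemidef_of_apply_star_mul_self_nonneg {φ : A →ₗ[ℂ] ℂ}
    (hφ : ∀ a, 0 ≤ φ (star a * a)) (a : n → A) :
    (of fun i j ↦ φ (star (a i) * a j)).PosSemidef :=
  posSemidef_of_dotProduct_mulVec_nonneg fun x ↦
    star_dotProduct_mulVec_apply_star_mul φ a x ▸ hφ _

end PositiveFunctional

section TensorFunctional

variable {A₁ A₂ : Type*} [Ring A₁] [Algebra ℂ A₁] [Ring A₂] [Algebra ℂ A₂]
  (φ₁ : A₁ →ₗ[ℂ] ℂ) (φ₂ : A₂ →ₗ[ℂ] ℂ)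

@[simp]
theorem tensorFunctional_tmul (a : A₁) (b : A₂) :
    tensorFunctional φ₁ φ₂ (a ⊗ₜ b) = φ₁ a * φ₂ b := rfl

theorem tensorFunctional_one : tensorFunctional φ₁ φ₂ 1 = φ₁ 1 * φ₂ 1 := rfl

variable [StarRing A₁] [StarModule ℂ A₁] [StarRing A₂] [StarModule ℂ A₂]

theorem tensorFunctional_star_sum_mul_sum {ι : Type*} [Fintype ι] (a : ι → A₁) (b : ι → A₂) :
    tensorFunctional φ₁ φ₂ (star (∑ i, a i ⊗ₜ b i) * ∑ i, a i ⊗ₜ b i)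
      = ∑ i, ∑ j, φ₁ (star (a i) * a j) * φ₂ (star (b i) * b j) := by
  simp only [star_sum, TensorProduct.star_tmul, Finset.sum_mul_sum,
    Algebra.TensorProduct.tmul_mul_tmul, map_sum, tensorFunctional_tmul]

variable {φ₁ φ₂} in
theorem tensorFunctional_star_mul_self_nonneg (hφ₁ : ∀ a, 0 ≤ φ₁ (star a * a))
    (hφ₂ : ∀ b, 0 ≤ φ₂ (star b * b)) (x : A₁ ⊗[ℂ] A₂) :
    0 ≤ tensorFunctional φ₁ φ₂ (star x * x) := by
  obtain ⟨k, a, b, rfl⟩ := TensorProduct.exists_sum_tmul_eq x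
  rw [tensorFunctional_star_sum_mul_sum]
  exact ((posSemidef_of_apply_star_mul_self_nonneg hφ₁ a).hadamard
    (posSemidef_of_apply_star_mul_self_nonneg hφ₂ b)).sum_sum_nonneg

end TensorFunctional

/-- The tensor product of states is a state: it is unital, and positive on
`x* x` for every `x ∈ A₁ ⊗ A₂` (written as a finite sum `Σ aᵢ ⊗ bᵢ`, whose
adjoint is `Σ aᵢ* ⊗ bᵢ*`). -/
theorem tensor_product_of_states {A₁ A₂ : Type*}
    [Ring A₁] [Algebra ℂ A₁] [StarRing A₁] [StarModule ℂ A₁]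
    [Ring A₂] [Algebra ℂ A₂] [StarRing A₂] [StarModule ℂ A₂]
    (φ₁ : A₁ →ₗ[ℂ] ℂ) (φ₂ : A₂ →ₗ[ℂ] ℂ)
    (hu₁ : φ₁ 1 = 1) (hu₂ : φ₂ 1 = 1)
    (hp₁ : ∀ a : A₁, 0 ≤ φ₁ (star a * a)) (hp₂ : ∀ a : A₂, 0 ≤ φ₂ (star a * a)) :
    tensorFunctional φ₁ φ₂ 1 = 1 ∧
    ∀ {ι : Type} (s : Finset ι) (a : ι → A₁) (b : ι → A₂),
      0 ≤ tensorFunctional φ₁ φ₂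
        ((∑ i ∈ s, star (a i) ⊗ₜ[ℂ] star (b i)) * (∑ i ∈ s, a i ⊗ₜ[ℂ] b i)) := by
  refine ⟨by rw [tensorFunctional_one, hu₁, hu₂, one_mul], fun s a b ↦ ?_⟩
  simpa only [star_sum, TensorProduct.star_tmul] using
    tensorFunctional_star_mul_self_nonneg hp₁ hp₂ (∑ i ∈ s, a i ⊗ₜ[ℂ] b i)
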